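/- Let (L, ε, ∧_ε, ∨_ε) be a canonical ℰ-lattice such that the group Aut(Fix ε) of lattice automorphisms of Fix ε is trivial. Then Aut_ℰ(L) is isomorphic, as a group, to the direct product ∏_{a ∈ Fix ε} S'([a]), where S'([a]) is the subgroup of the symmetric group on the class [a] consisting of the permutations of [a] fixing a. -/

import Mathlib

/-- A canonical ℰ-lattice: a set `L` with a map `eps : L → L` and two associative,
commutative binary operations satisfying `a ∧ a = a ∨ a = ε a`,
the absorption laws `a ∧ (a ∨ b) = a ∨ (a ∧ b) = ε a`, and (canonicity)
all meets and joins are fixed points of `eps`. -/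
structure CELattice (L : Type*) where
  eps : L → L
  meet : L → L → L
  join : L → L → L
  meet_assoc : ∀ a b c, meet a (meet b c) = meet (meet a b) c
  join_assoc : ∀ a b c, join a (join b c) = join (join a b) c
  meet_comm : ∀ a b, meet a b = meet b a
  join_comm : ∀ a b, join a b = join b a
  meet_self : ∀ a, meet a a = eps a
  join_self : ∀ a, join a a = eps a
  meet_absorb : ∀ a b, meet a (join a b) = eps a
  join_absorb : ∀ a b, join a (meet a b) = eps a
  meet_canonical : ∀ a b, eps (meet a b) = meet a b
  join_canonical : ∀ a b, eps (join a b) = join a b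

namespace CELattice

variable {L : Type*}

/-- The set of fixed points of `eps`. -/
def Fix (E : CELattice L) : Set L := {a | E.eps a = a}

/-- The class `[a] = {b | ε b = ε a}`. -/
def cls (E : CELattice L) (a : L) : Set L := {b | E.eps b = E.eps a}

/-- The fixed points of `eps`, as a type. -/
abbrev FixT (E : CELattice L) : Type _ := {a : L // E.eps a = a}

/-- An ℰ-lattice isomorphism: a bijection commuting with `eps` and preserving
meets and joins. -/
def IsEIso {L₁ L₂ : Type*} (E₁ : CELattice L₁) (E₂ : CELattice L₂) (f : L₁ → L₂) : Prop :=
  Function.Bijective f ∧ (∀ a, f (E₁.eps a) = E₂.eps (f a)) ∧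
    (∀ a b, f (E₁.meet a b) = E₂.meet (f a) (f b)) ∧
    (∀ a b, f (E₁.join a b) = E₂.join (f a) (f b))

end CELattice

namespace CELattice

variable {L : Type*}

/-- The group `Aut_ℰ(L)` of ℰ-lattice automorphisms of a canonical ℰ-lattice,
as a subgroup of the symmetric group on `L`. -/
def EAut (E : CELattice L) : Subgroup (Equiv.Perm L) where
  carrier := {f : Equiv.Perm L | (∀ a, f (E.eps a) = E.eps (f a)) ∧
    (∀ a b, f (E.meet a b) = E.meet (f a) (f b)) ∧
    (∀ a b, f (E.join a b) = E.join (f a) (f b))}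
  one_mem' := by simp
  mul_mem' := by
    rintro f g ⟨hf1, hf2, hf3⟩ ⟨hg1, hg2, hg3⟩
    refine ⟨fun a => ?_, fun a b => ?_, fun a b => ?_⟩ <;>
      simp [Equiv.Perm.mul_apply, hg1, hg2, hg3, hf1, hf2, hf3]
  inv_mem' := by
    rintro f ⟨hf1, hf2, hf3⟩
    refine ⟨fun a => ?_, fun a b => ?_, fun a b => ?_⟩ <;>
      (apply f.injective;
       simp [hf1, hf2, hf3, Equiv.Perm.coe_inv, Equiv.apply_symm_apply])

/-- The meet of two fixed points, as a fixed point (the lattice operation on `Fix ε`). -/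
def fixMeet (E : CELattice L) (a b : E.FixT) : E.FixT :=
  ⟨E.meet a.1 b.1, E.meet_canonical _ _⟩

/-- The join of two fixed points, as a fixed point (the lattice operation on `Fix ε`). -/
def fixJoin (E : CELattice L) (a b : E.FixT) : E.FixT :=
  ⟨E.join a.1 b.1, E.join_canonical _ _⟩

/-- The group `Aut(Fix ε)` of lattice automorphisms of the lattice of fixed points. -/
def AutFix (E : CELattice L) : Subgroup (Equiv.Perm E.FixT) where
  carrier := {σ : Equiv.Perm E.FixT | (∀ a b, σ (E.fixMeet a b) = E.fixMeet (σ a) (σ b)) ∧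
    (∀ a b, σ (E.fixJoin a b) = E.fixJoin (σ a) (σ b))}
  one_mem' := by simp
  mul_mem' := by
    rintro f g ⟨hf1, hf2⟩ ⟨hg1, hg2⟩
    refine ⟨fun a b => ?_, fun a b => ?_⟩ <;>
      simp [Equiv.Perm.mul_apply, hg1, hg2, hf1, hf2]
  inv_mem' := by
    rintro f ⟨hf1, hf2⟩
    refine ⟨fun a b => ?_, fun a b => ?_⟩ <;>
      (apply f.injective; simp [hf1, hf2, Equiv.Perm.coe_inv, Equiv.apply_symm_apply])

/-- `S'([a])`: the subgroup of the symmetric group on the class `[a]`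
consisting of the permutations fixing `a`. -/
def Sprime (E : CELattice L) (a : L) : Subgroup (Equiv.Perm {b : L // E.eps b = E.eps a}) where
  carrier := {σ | σ ⟨a, rfl⟩ = ⟨a, rfl⟩}
  one_mem' := by simp
  mul_mem' := by
    intro f g hf hg
    simp only [Set.mem_setOf_eq] at *
    simp [Equiv.Perm.mul_apply, hg, hf]
  inv_mem' := by
    intro f hf
    simp only [Set.mem_setOf_eq] at *
    rw [Equiv.Perm.inv_eq_iff_eq, hf]

end CELattice

/-!
An ℰ-automorphism `f` restricts to a lattice automorphism of `Fix ε`, so when `Aut(Fix ε)` is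
trivial `f` is the identity on `Fix ε`; then `f (ε x) = ε x` gives `ε (f x) = ε x`, i.e. `f`
maps every class `[a]` onto itself and fixes `a`. Conversely, canonicity gives
`x ∧ y = ε x ∧ ε y`, so meets and joins only depend on classes and every permutation that
preserves the classes and fixes `Fix ε` pointwise is an ℰ-automorphism. The group of such
permutations is the product of the groups `S'([a])`, by restriction to the classes.
-/

namespace CELattice

variable {L : Type*} (E : CELattice L)

lemma eps_eps (a : L) : E.eps (E.eps a) = E.eps a := by
  rw [← E.meet_self a, E.meet_canonical]

lemma meet_eps_eps (a b : L) : E.meet (E.eps a) (E.eps b) = E.meet a b := by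
  have swap : E.meet (E.meet a a) (E.meet b b) = E.meet (E.meet a b) (E.meet a b) := by
    rw [← E.meet_assoc, ← E.meet_assoc, E.meet_assoc a b b, E.meet_comm (E.meet a b) b]
  rw [← E.meet_self a, ← E.meet_self b, swap, E.meet_self, E.meet_canonical]

lemma join_eps_eps (a b : L) : E.join (E.eps a) (E.eps b) = E.join a b := by
  have swap : E.join (E.join a a) (E.join b b) = E.join (E.join a b) (E.join a b) := by
    rw [← E.join_assoc, ← E.join_assoc, E.join_assoc a b b, E.join_comm (E.join a b) b]
  rw [← E.join_self a, ← E.join_self b, swap, E.join_self, E.join_canonical]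

def ClassAut : Subgroup (Equiv.Perm L) where
  carrier := {f | (∀ x, E.eps (f x) = E.eps x) ∧ ∀ c, E.eps c = c → f c = c}
  one_mem' := ⟨fun _ => rfl, fun _ _ => rfl⟩
  mul_mem' := by
    rintro f g ⟨hf, hf'⟩ ⟨hg, hg'⟩
    exact ⟨fun x => (hf _).trans (hg x), fun c hc => (congrArg f (hg' c hc)).trans (hf' c hc)⟩
  inv_mem' := by
    rintro f ⟨hf, hf'⟩
    refine ⟨fun x => ?_, fun c hc => Equiv.Perm.inv_eq_iff_eq.mpr (hf' c hc).symm⟩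
    simpa using (hf (f⁻¹ x)).symm

lemma classAut_le_eAut : E.ClassAut ≤ E.EAut := by
  rintro f ⟨hf, hf'⟩
  refine ⟨fun x => ?_, fun x y => ?_, fun x y => ?_⟩
  · rw [hf' _ (E.eps_eps x), hf]
  · rw [hf' _ (E.meet_canonical x y), ← E.meet_eps_eps (f x), hf, hf, E.meet_eps_eps]
  · rw [hf' _ (E.join_canonical x y), ← E.join_eps_eps (f x), hf, hf, E.join_eps_eps]

lemma eps_apply_eq_self_iff {f : Equiv.Perm L} (hf : f ∈ E.EAut) (x : L) :
    E.eps (f x) = f x ↔ E.eps x = x := by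
  rw [← hf.1, f.injective.eq_iff]

def restrictFix {f : Equiv.Perm L} (hf : f ∈ E.EAut) : E.AutFix :=
  ⟨f.subtypePerm (E.eps_apply_eq_self_iff hf),
    fun a b => Subtype.ext (hf.2.1 a b), fun a b => Subtype.ext (hf.2.2 a b)⟩

lemma eAut_le_classAut (h : ∀ σ : E.AutFix, σ = 1) : E.EAut ≤ E.ClassAut := by
  intro f hf
  have fix : ∀ c, E.eps c = c → f c = c := fun c hc =>
    congrArg (fun σ : E.AutFix => ((σ : Equiv.Perm E.FixT) ⟨c, hc⟩ : L)) (h (E.restrictFix hf))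
  exact ⟨fun x => by rw [← hf.1, fix _ (E.eps_eps x)], fix⟩

/-- The map acting on each class `[a]`, `a ∈ Fix ε`, by `σ a`. -/
def glueFun (σ : ∀ a : E.FixT, Equiv.Perm {b : L // E.eps b = E.eps a}) (x : L) : L :=
  (σ ⟨E.eps x, E.eps_eps x⟩ ⟨x, (E.eps_eps x).symm⟩ : L)

lemma glueFun_apply (σ : ∀ a : E.FixT, Equiv.Perm {b : L // E.eps b = E.eps a})
    (a : E.FixT) (x : {b : L // E.eps b = E.eps a}) : E.glueFun σ x = σ a x := by
  obtain ⟨a, ha⟩ := a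
  obtain ⟨x, hx⟩ := x
  obtain rfl : E.eps x = a := hx.trans ha
  rfl

lemma glueFun_inv_glueFun (σ : ∀ a : E.FixT, Equiv.Perm {b : L // E.eps b = E.eps a}) (x : L) :
    E.glueFun σ⁻¹ (E.glueFun σ x) = x := by
  refine (E.glueFun_apply σ⁻¹ _ (σ _ _)).trans ?_
  simp

def glue (σ : ∀ a : E.FixT, Equiv.Perm {b : L // E.eps b = E.eps a}) : Equiv.Perm L where
  toFun := E.glueFun σ
  invFun := E.glueFun σ⁻¹
  left_inv := E.glueFun_inv_glueFun σ
  right_inv x := by simpa using E.glueFun_inv_glueFun σ⁻¹ x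

lemma glue_mem_classAut (σ : ∀ a : E.FixT, E.Sprime a) : E.glue (fun a => σ a) ∈ E.ClassAut := by
  refine ⟨fun x => (((σ _).1 : Equiv.Perm _) _).2.trans (E.eps_eps x), fun c hc => ?_⟩
  have fixes_c : (σ ⟨c, hc⟩).1 ⟨c, rfl⟩ = ⟨c, rfl⟩ := (σ ⟨c, hc⟩).2
  exact (E.glueFun_apply (fun a => σ a) ⟨c, hc⟩ ⟨c, rfl⟩).trans (congrArg Subtype.val fixes_c)

def classAutEquivPi : E.ClassAut ≃* ∀ a : E.FixT, E.Sprime a where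
  toFun f a := ⟨(f : Equiv.Perm L).subtypePerm fun x => by rw [f.2.1 x],
    Subtype.ext (f.2.2 a a.2)⟩
  invFun σ := ⟨E.glue fun a => σ a, E.glue_mem_classAut σ⟩
  left_inv _ := rfl
  right_inv σ := by
    funext a
    ext x
    exact E.glueFun_apply (fun a => σ a) a x
  map_mul' _ _ := rfl

end CELattice

open CELattice in
theorem eaut_iso_of_trivial_autFix_general {L : Type*} (E : CELattice L)
    (h : ∀ σ : AutFix E, σ = 1) :
    Nonempty (EAut E ≃* ∀ a : E.FixT, Sprime E (a : L)) :=
  ⟨(MulEquiv.subgroupCongr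
      (le_antisymm (E.eAut_le_classAut h) E.classAut_le_eAut)).trans E.classAutEquivPi⟩

open CELattice in
/-- Corollary 1 (2.1): if the group of lattice automorphisms of `Fix ε` is trivial, then
`Aut_ℰ(L) ≅ ∏_{a ∈ Fix ε} S'([a])`. -/
theorem eaut_iso_of_trivial_autFix {L : Type*} [Nonempty L] (E : CELattice L)
    (h : ∀ σ : AutFix E, σ = 1) :
    Nonempty (EAut E ≃* ∀ a : E.FixT, Sprime E (a : L)) :=
  eaut_iso_of_trivial_autFix_general E h
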